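/- Let c ∈ ℂ, r > 0, and let f : ℂ → ℂ be complex-differentiable on an open set containing the closed disk {z : |z - c| ≤ r}. Let x_0, …, x_n be distinct points in the open disk {z : |z - c| < r}, let z_1, …, z_m ∈ ℂ with z_j ∉ {x_0, …, x_n} for all j, set l(s) = ∏_{i=0}^n (s - x_i), q(s) = ∏_{j=1}^m (s - z_j), φ(s) = l(s)/q(s), and define the rational interpolant r(x) = ∑_{i=0}^n f(x_i)·(q(x_i)/q(x))·∏_{j≠i} (x - x_j)/(x_i - x_j). Then for every x in the open disk {z : |z - c| < r} with q(x) ≠ 0, |f(x) - r(x)| ≤ (r/(2π))·(∫_0^{2π} |f(c + re^{iθ})|/|c + re^{iθ} - x| dθ)·|φ(x)|·sup_{θ∈[0,2π]} (1/|φ(c + re^{iθ})|). -/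

import Mathlib

/-!
Since `q · r` is the polynomial interpolant of `f · q` at the nodes, the error `f - r` is
`1 / q` times the interpolation error of the holomorphic function `f · q`. Writing every value
of `f · q` by Cauchy's formula, that error becomes a contour integral against the interpolation
error of the Cauchy kernel `w ↦ 1 / (w - x)`, which is exactly `l(x) / (l(w) (w - x))`. This gives
Walsh's formula `f(x) - r(x) = (2πi)⁻¹ ∮ φ(x) / φ(w) · f(w) / (w - x) dw`, and the bound follows by
estimating the integrand on the circle.
-/

open Finset Polynomial Lagrange Metric Complex Real

namespace Lagrange

variable {K : Type*} [Field K] {ι : Type*} [DecidableEq ι] {s : Finset ι} {v : ι → K}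

theorem eval_basis (x : K) (i : ι) :
    (Lagrange.basis s v i).eval x = ∏ j ∈ s.erase i, (x - v j) / (v i - v j) := by
  simp [Lagrange.basis, basisDivisor, eval_prod, div_eq_inv_mul]

theorem sum_mul_div_mul_prod_eq_eval_interpolate_div (r q : K → K) (x : K) :
    ∑ i ∈ s, r (v i) * (q (v i) / q x) * ∏ j ∈ s.erase i, (x - v j) / (v i - v j) =
      (interpolate s v fun i => r (v i) * q (v i)).eval x / q x := by
  rw [interpolate_apply, eval_finsetSum, sum_div]
  refine sum_congr rfl fun i _ => ?_
  rw [eval_mul, eval_C, eval_basis]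
  ring

theorem sum_nodalWeight_mul_inv_sub (hvs : Set.InjOn v s) (hs : s.Nonempty) {x : K}
    (hx : ∀ i ∈ s, x ≠ v i) :
    ∑ i ∈ s, nodalWeight s v i * (x - v i)⁻¹ = ((nodal s v).eval x)⁻¹ := by
  have h := eval_interpolate_not_at_node 1 hx
  rw [interpolate_one hvs hs, eval_one] at h
  simpa using eq_inv_of_mul_eq_one_right h.symm

theorem inv_sub_sub_eval_interpolate_inv_sub (hvs : Set.InjOn v s) {w x : K}
    (hw : ∀ i ∈ s, w ≠ v i) (hwx : w ≠ x) :
    (w - x)⁻¹ - (interpolate s v fun i => (w - v i)⁻¹).eval x =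
      (nodal s v).eval x / (nodal s v).eval w * (w - x)⁻¹ := by
  by_cases hnode : ∃ i ∈ s, x = v i
  · obtain ⟨i, hi, rfl⟩ := hnode
    rw [eval_interpolate_at_node _ hvs hi, eval_nodal_at_node hi]
    simp
  push Not at hnode
  rcases s.eq_empty_or_nonempty with rfl | hs
  · simp
  have hsplit : ∀ i ∈ s, nodalWeight s v i * (x - v i)⁻¹ * (w - v i)⁻¹ =
      (nodalWeight s v i * (x - v i)⁻¹ - nodalWeight s v i * (w - v i)⁻¹) * (w - x)⁻¹ := by
    intro i hi
    have := sub_ne_zero.2 (hnode i hi)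
    have := sub_ne_zero.2 (hw i hi)
    have := sub_ne_zero.2 hwx
    field_simp
    ring
  rw [eval_interpolate_not_at_node _ hnode, sum_congr rfl hsplit, ← sum_mul, sum_sub_distrib,
    sum_nodalWeight_mul_inv_sub hvs hs hnode, sum_nodalWeight_mul_inv_sub hvs hs hw]
  have := eval_nodal_not_at_node hnode
  have := eval_nodal_not_at_node hw
  field_simp
  ring

end Lagrange

theorem Polynomial.continuousOn_one_div_norm_eval_div {P Q : ℂ[X]} {S : Set ℂ}
    (hP : ∀ w ∈ S, P.eval w ≠ 0) :
    ContinuousOn (fun w => 1 / ‖P.eval w / Q.eval w‖) S := by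
  simp_rw [norm_div, one_div_div]
  exact Q.continuous.continuousOn.norm.div P.continuous.continuousOn.norm
    fun w hw => norm_ne_zero_iff.2 (hP w hw)

theorem IsCompact.le_ciSup_of_continuousOn {α : Type*} [TopologicalSpace α] {K : Set α}
    (hK : IsCompact K) {G : α → ℝ} (hG : ContinuousOn G K) {t : α} (ht : t ∈ K) :
    G t ≤ ⨆ s : K, G s :=
  le_ciSup (f := fun s : K => G s) (by rw [← Set.image_eq_range]; exact hK.bddAbove_image hG)
    ⟨t, ht⟩

section Hermite

variable {ι : Type*} [DecidableEq ι] {c : ℂ} {R : ℝ} {s : Finset ι} {v : ι → ℂ} {x : ℂ}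

theorem DiffContOnCl.sub_eval_interpolate_eq_circleIntegral {F : ℂ → ℂ}
    (hF : DiffContOnCl ℂ F (ball c R)) (hvs : Set.InjOn v s) (hv : ∀ i ∈ s, v i ∈ ball c R)
    (hx : x ∈ ball c R) :
    F x - (interpolate s v fun i => F (v i)).eval x =
      (2 * π * I)⁻¹ *
        ∮ w in C(c, R), (nodal s v).eval x / (nodal s v).eval w * (w - x)⁻¹ * F w := by
  have hR : 0 ≤ R := (pos_of_mem_ball hx).le
  have hcauchy : ∀ y ∈ ball c R, F y = (2 * π * I)⁻¹ * ∮ w in C(c, R), (w - y)⁻¹ * F w :=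
    fun y hy => (hF.two_pi_i_inv_smul_circleIntegral_sub_inv_smul hy).symm
  have hint : ∀ y ∈ ball c R, CircleIntegrable (fun w => (w - y)⁻¹ * F w) c R := fun y hy =>
    ContinuousOn.circleIntegrable hR <|
      ((continuousOn_id.sub continuousOn_const).inv₀ fun w hw =>
        sub_ne_zero.2 (sphere_disjoint_ball.ne_of_mem hw hy)).mul
      (hF.continuousOn_ball.mono sphere_subset_closedBall)
  have hint_basis : ∀ i ∈ s, CircleIntegrable
      (fun w => (Lagrange.basis s v i).eval x * ((w - v i)⁻¹ * F w)) c R :=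
    fun i hi => (hint (v i) (hv i hi)).const_smul
  have hkernel : Set.EqOn (fun w => (nodal s v).eval x / (nodal s v).eval w * (w - x)⁻¹ * F w)
      (fun w => (w - x)⁻¹ * F w -
        ∑ i ∈ s, (Lagrange.basis s v i).eval x * ((w - v i)⁻¹ * F w)) (sphere c R) := by
    intro w hw
    dsimp only
    rw [← inv_sub_sub_eval_interpolate_inv_sub hvs
      (fun i hi => sphere_disjoint_ball.ne_of_mem hw (hv i hi))
      (sphere_disjoint_ball.ne_of_mem hw hx)]
    rw [interpolate_apply, eval_finsetSum, sub_mul, sum_mul]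
    refine congrArg _ (sum_congr rfl fun i _ => ?_)
    rw [eval_mul, eval_C]
    ring
  rw [circleIntegral.integral_congr hR hkernel, circleIntegral.integral_sub (hint x hx)
      (by simpa only [Finset.sum_fn] using CircleIntegrable.sum s hint_basis),
    circleIntegral.integral_fun_sum hint_basis, mul_sub, ← hcauchy x hx, interpolate_apply,
    eval_finsetSum, mul_sum]
  congr 1
  refine sum_congr rfl fun i hi => ?_
  rw [eval_mul, eval_C, hcauchy (v i) (hv i hi), circleIntegral.integral_const_mul]
  ring

theorem DiffContOnCl.sub_eval_interpolate_div_eq_circleIntegral {f : ℂ → ℂ}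
    (hf : DiffContOnCl ℂ f (ball c R)) (Q : ℂ[X]) (hvs : Set.InjOn v s)
    (hv : ∀ i ∈ s, v i ∈ ball c R) (hx : x ∈ ball c R) (hQx : Q.eval x ≠ 0) :
    f x - (interpolate s v fun i => f (v i) * Q.eval (v i)).eval x / Q.eval x =
      (2 * π * I)⁻¹ * ∮ w in C(c, R),
        (nodal s v).eval x / Q.eval x / ((nodal s v).eval w / Q.eval w) * (w - x)⁻¹ * f w := by
  have hfQ : DiffContOnCl ℂ (fun w => f w * Q.eval w) (ball c R) :=
    ⟨hf.1.mul Q.differentiable.differentiableOn, hf.2.mul Q.continuous.continuousOn⟩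
  calc _ = (f x * Q.eval x - (interpolate s v fun i => f (v i) * Q.eval (v i)).eval x)
        * (Q.eval x)⁻¹ := by field_simp
    _ = _ := by
      rw [hfQ.sub_eval_interpolate_eq_circleIntegral hvs hv hx, mul_assoc,
        mul_comm _ (Q.eval x)⁻¹, ← circleIntegral.integral_const_mul]
      congr 2 with w
      -- also where `Q.eval w = 0`: both sides vanish, as `a / 0 = 0`
      simp only [div_eq_mul_inv, mul_inv, inv_inv]
      ring

end Hermite

open intervalIntegral in
theorem norm_two_pi_I_inv_smul_circleIntegral_le {E : Type*} [NormedAddCommGroup E]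
    [NormedSpace ℂ E] {f : ℂ → E} {c : ℂ} {R : ℝ} (hR : 0 ≤ R) {B : ℝ → ℝ}
    (hB : IntervalIntegrable B MeasureTheory.volume 0 (2 * π))
    (hfB : ∀ θ ∈ Set.Icc 0 (2 * π), ‖f (circleMap c R θ)‖ ≤ B θ) :
    ‖(2 * π * I : ℂ)⁻¹ • ∮ z in C(c, R), f z‖ ≤ R / (2 * π) * ∫ θ in 0..2 * π, B θ := by
  have hnorm : ‖(2 * π * I : ℂ)⁻¹‖ = (2 * π)⁻¹ := by simp [pi_pos.le]
  rw [norm_smul, hnorm, div_eq_inv_mul, mul_assoc]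
  gcongr
  by_cases hf : CircleIntegrable f c R
  · calc _ ≤ ∫ θ in 0..2 * π, ‖deriv (circleMap c R) θ • f (circleMap c R θ)‖ :=
          norm_integral_le_integral_norm two_pi_pos.le
      _ ≤ ∫ θ in 0..2 * π, R * B θ := by
          refine integral_mono_on two_pi_pos.le hf.out.norm (hB.const_mul R) fun θ hθ => ?_
          rw [norm_smul, deriv_circleMap, norm_mul, norm_circleMap_zero, abs_of_nonneg hR,
            norm_I, mul_one]
          gcongr
          exact hfB θ hθ
      _ = R * ∫ θ in 0..2 * π, B θ := integral_const_mul R B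
  · rw [circleIntegral.integral_undef hf, norm_zero]
    exact mul_nonneg hR
      (integral_nonneg two_pi_pos.le fun θ hθ => (norm_nonneg _).trans (hfB θ hθ))

theorem norm_two_pi_I_inv_mul_circleIntegral_div_mul_le {f φ : ℂ → ℂ} {c X : ℂ} {R : ℝ}
    (hR : 0 ≤ R) (hf : ContinuousOn f (sphere c R)) (hφ : ContinuousOn (fun w => 1 / ‖φ w‖)
    (sphere c R)) (hX : X ∉ sphere c R) :
    ‖(2 * π * I)⁻¹ * ∮ w in C(c, R), φ X / φ w * (w - X)⁻¹ * f w‖ ≤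
      R / (2 * π) * (∫ θ in 0..2 * π, ‖f (circleMap c R θ)‖ / ‖circleMap c R θ - X‖) * ‖φ X‖ *
        ⨆ θ : Set.Icc 0 (2 * π), 1 / ‖φ (circleMap c R θ)‖ := by
  set M := ⨆ θ : Set.Icc 0 (2 * π), 1 / ‖φ (circleMap c R θ)‖
  have hcircle : ∀ θ, circleMap c R θ ∈ sphere c R := circleMap_mem_sphere c hR
  have hM : ∀ θ ∈ Set.Icc 0 (2 * π), 1 / ‖φ (circleMap c R θ)‖ ≤ M := fun θ hθ =>
    isCompact_Icc.le_ciSup_of_continuousOn (G := fun t => 1 / ‖φ (circleMap c R t)‖)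
      (hφ.comp (continuous_circleMap c R).continuousOn fun t _ => hcircle t) hθ
  have hB : Continuous fun θ => ‖f (circleMap c R θ)‖ / ‖circleMap c R θ - X‖ :=
    (hf.comp_continuous (continuous_circleMap c R) hcircle).norm.div
      ((continuous_circleMap c R).sub continuous_const).norm fun θ =>
        norm_ne_zero_iff.2 (sub_ne_zero.2 fun h => hX (h ▸ hcircle θ))
  rw [← smul_eq_mul]
  refine (norm_two_pi_I_inv_smul_circleIntegral_le hR
    ((hB.intervalIntegrable 0 (2 * π)).const_mul (‖φ X‖ * M)) fun θ hθ => ?_).trans_eq ?_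
  · calc
      _ = ‖φ X‖ * (1 / ‖φ (circleMap c R θ)‖) *
          (‖f (circleMap c R θ)‖ / ‖circleMap c R θ - X‖) := by
        rw [norm_mul, norm_mul, norm_div, norm_inv]
        ring
      _ ≤ _ := by gcongr; exact hM θ hθ
  · rw [intervalIntegral.integral_const_mul]
    ring

theorem rational_interpolation_error_bound_general (c : ℂ) (r : ℝ) (hr : 0 < r) (f : ℂ → ℂ)
    (U : Set ℂ) (hUsub : Metric.closedBall c r ⊆ U)
    (hf : DifferentiableOn ℂ f U)
    (n : ℕ) (x : Fin (n + 1) → ℂ) (hx : Function.Injective x)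
    (hxball : ∀ i, x i ∈ Metric.ball c r)
    (m : ℕ) (z : Fin m → ℂ)
    (l q φ R : ℂ → ℂ)
    (hl : ∀ s, l s = ∏ i, (s - x i))
    (hq : ∀ s, q s = ∏ j, (s - z j))
    (hφ : ∀ s, φ s = l s / q s)
    (hR : ∀ X, R X = ∑ i, f (x i) * (q (x i) / q X) *
      ∏ j ∈ univ.erase i, (X - x j) / (x i - x j))
    (X : ℂ) (hX : X ∈ Metric.ball c r) (hqX : q X ≠ 0) :
    ‖f X - R X‖ ≤ (r / (2 * Real.pi)) *
      (∫ θ in (0:ℝ)..(2 * Real.pi),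
        ‖f (c + (r : ℂ) * Complex.exp ((θ : ℂ) * Complex.I))‖ /
          ‖c + (r : ℂ) * Complex.exp ((θ : ℂ) * Complex.I) - X‖) *
      ‖φ X‖ *
      (⨆ θ : Set.Icc (0:ℝ) (2 * Real.pi),
        1 / ‖φ (c + (r : ℂ) * Complex.exp (((θ : ℝ) : ℂ) * Complex.I))‖) := by
  obtain rfl : q = fun w => (nodal univ z).eval w := funext fun w => by rw [hq, eval_nodal]
  obtain rfl : l = fun w => (nodal univ x).eval w := funext fun w => by rw [hl, eval_nodal]
  beta_reduce at hR hφ hqX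
  have hwalsh := (hf.diffContOnCl_ball hUsub).sub_eval_interpolate_div_eq_circleIntegral
    (nodal univ z) (s := univ) hx.injOn (fun i _ => hxball i) hX hqX
  simp only [← hφ] at hwalsh
  rw [hR, sum_mul_div_mul_prod_eq_eval_interpolate_div f fun w => (nodal univ z).eval w,
    hwalsh]
  refine norm_two_pi_I_inv_mul_circleIntegral_div_mul_le hr.le
    (hf.continuousOn.mono (sphere_subset_closedBall.trans hUsub)) ?_
    (sphere_disjoint_ball.notMem_of_mem_right hX)
  simp only [hφ]
  exact continuousOn_one_div_norm_eval_div fun w hw =>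
    eval_nodal_not_at_node fun i _ => sphere_disjoint_ball.ne_of_mem hw (hxball i)

/-- Pointwise error bound (2b) for rational interpolation with prescribed poles, deduced
from Walsh's Hermite integral formula over a circular contour of center `c`, radius `r`. -/
theorem rational_interpolation_error_bound (c : ℂ) (r : ℝ) (hr : 0 < r) (f : ℂ → ℂ)
    (U : Set ℂ) (hUopen : IsOpen U) (hUsub : Metric.closedBall c r ⊆ U)
    (hf : DifferentiableOn ℂ f U)
    (n : ℕ) (x : Fin (n + 1) → ℂ) (hx : Function.Injective x)
    (hxball : ∀ i, x i ∈ Metric.ball c r)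
    (m : ℕ) (z : Fin m → ℂ) (hz : ∀ j i, z j ≠ x i)
    (l q φ R : ℂ → ℂ)
    (hl : ∀ s, l s = ∏ i, (s - x i))
    (hq : ∀ s, q s = ∏ j, (s - z j))
    (hφ : ∀ s, φ s = l s / q s)
    (hR : ∀ X, R X = ∑ i, f (x i) * (q (x i) / q X) *
      ∏ j ∈ univ.erase i, (X - x j) / (x i - x j))
    (X : ℂ) (hX : X ∈ Metric.ball c r) (hqX : q X ≠ 0) :
    ‖f X - R X‖ ≤ (r / (2 * Real.pi)) *
      (∫ θ in (0:ℝ)..(2 * Real.pi),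
        ‖f (c + (r : ℂ) * Complex.exp ((θ : ℂ) * Complex.I))‖ /
          ‖c + (r : ℂ) * Complex.exp ((θ : ℂ) * Complex.I) - X‖) *
      ‖φ X‖ *
      (⨆ θ : Set.Icc (0:ℝ) (2 * Real.pi),
        1 / ‖φ (c + (r : ℂ) * Complex.exp (((θ : ℝ) : ℂ) * Complex.I))‖) :=
  rational_interpolation_error_bound_general c r hr f U hUsub hf n x hx hxball m z l q φ R hl hq hφ
    hR X hX hqX
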